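/- Let V be a vector space over a field k, let R be a Hecke symmetry on V with parameter q, and let ζ be an invertible linear operator on V such that ζ⊗ζ commutes with R, i.e. (ζ⊗ζ)∘R = R∘(ζ⊗ζ). Then: (a) (ζ⊗Id_V)∘R∘(ζ⁻¹⊗Id_V) = (Id_V⊗ζ⁻¹)∘R∘(Id_V⊗ζ); call this operator R_ζ (the twist of R by ζ); (b) R_ζ is again a Hecke symmetry with the same parameter q (it satisfies the braid equation and the Hecke relation); (c) Im(R_ζ − q·Id_{V⊗V}) = (ζ⊗Id_V)(Im(R − q·Id_{V⊗V})); and (d) ζ⊗ζ commutes with R_ζ and (ζ⁻¹⊗Id_V)∘R_ζ∘(ζ⊗Id_V) = R. -/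

import Mathlib

/-!
The twist `R_ζ` is the conjugate of `R` by `ζ ⊗ 1`. Since `ζ ⊗ ζ = (ζ ⊗ 1)(1 ⊗ ζ)` commutes
with `R`, it is also the conjugate of `R` by `1 ⊗ ζ⁻¹`. Conjugation by a linear automorphism is an
algebra automorphism of the endomorphism ring, which carries the Hecke relation and the image of
`R - q` over to `R_ζ`. For the braid equation, `R_ζ ⊗ 1` and `1 ⊗ R_ζ` are the conjugates of
`R ⊗ 1` and `1 ⊗ R` by the same operator `ζ ⊗ 1 ⊗ ζ⁻¹`: the factor `1 ⊗ 1 ⊗ ζ⁻¹` commutes with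
`R ⊗ 1` and the factor `ζ ⊗ 1 ⊗ 1` commutes with `1 ⊗ R`.
-/

open TensorProduct LinearMap

noncomputable section

variable (k V : Type) [Field k] [AddCommGroup V] [Module k V]

/-- `R ⊗ Id` acting on `V ⊗ (V ⊗ V)`. -/
def op12 (R : V ⊗[k] V →ₗ[k] V ⊗[k] V) :
    V ⊗[k] (V ⊗[k] V) →ₗ[k] V ⊗[k] (V ⊗[k] V) :=
  (TensorProduct.assoc k V V V).toLinearMap ∘ₗ LinearMap.rTensor V R ∘ₗ
    (TensorProduct.assoc k V V V).symm.toLinearMap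

/-- `Id ⊗ R` acting on `V ⊗ (V ⊗ V)`. -/
def op23 (R : V ⊗[k] V →ₗ[k] V ⊗[k] V) :
    V ⊗[k] (V ⊗[k] V) →ₗ[k] V ⊗[k] (V ⊗[k] V) :=
  LinearMap.lTensor V R

/-- A Hecke symmetry with parameter `q`: an operator on `V ⊗ V` satisfying the braid
equation and the Hecke relation `(R - q·Id)(R + Id) = 0`, with `q ≠ 0`. -/
def IsHeckeSymmetry (q : k) (R : V ⊗[k] V →ₗ[k] V ⊗[k] V) : Prop :=
  q ≠ 0 ∧
    op12 k V R ∘ₗ op23 k V R ∘ₗ op12 k V R = op23 k V R ∘ₗ op12 k V R ∘ₗ op23 k V R ∧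
    (R - q • LinearMap.id) ∘ₗ (R + LinearMap.id) = 0

/-- The twist `R_ζ = (ζ ⊗ Id) ∘ R ∘ (ζ⁻¹ ⊗ Id)` of `R` by `ζ`. -/
def twist (ζ : V ≃ₗ[k] V) (R : V ⊗[k] V →ₗ[k] V ⊗[k] V) :
    V ⊗[k] V →ₗ[k] V ⊗[k] V :=
  LinearMap.rTensor V ζ.toLinearMap ∘ₗ R ∘ₗ LinearMap.rTensor V ζ.symm.toLinearMap

namespace LinearEquiv

section CommSemiring

variable {R M N : Type*} [CommSemiring R] [AddCommMonoid M] [Module R M] [AddCommMonoid N]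
  [Module R N]

theorem conj_eq_self_iff {e : M ≃ₗ[R] M} {f : Module.End R M} :
    e.conj f = f ↔ e.toLinearMap ∘ₗ f = f ∘ₗ e.toLinearMap := by
  constructor
  · intro h
    conv_rhs => rw [← h]
    ext x
    simp
  · intro h
    rw [conj_apply, h, LinearMap.comp_assoc, comp_symm, LinearMap.comp_id]

theorem conj_conj_comm {e₁ e₂ : M ≃ₗ[R] M}
    (h : e₁.toLinearMap ∘ₗ e₂.toLinearMap = e₂.toLinearMap ∘ₗ e₁.toLinearMap)
    (f : Module.End R M) : e₁.conj (e₂.conj f) = e₂.conj (e₁.conj f) := by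
  have htrans : e₂.trans e₁ = e₁.trans e₂ := toLinearMap_injective (by simpa using h)
  rw [← trans_apply, conj_trans, htrans, ← conj_trans, trans_apply]

theorem range_conj (e : M ≃ₗ[R] N) (f : Module.End R M) :
    LinearMap.range (e.conj f) = (LinearMap.range f).map e.toLinearMap := by
  rw [conj_apply, range_comp, LinearMap.range_comp]

theorem lTensor_conj (e : N ≃ₗ[R] N) (f : Module.End R N) :
    (e.conj f).lTensor M = (e.lTensor M).conj (f.lTensor M) := by
  simp only [conj_apply, LinearMap.lTensor_comp, coe_lTensor, symm_lTensor]

theorem rTensor_conj (e : N ≃ₗ[R] N) (f : Module.End R N) :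
    (e.conj f).rTensor M = (e.rTensor M).conj (f.rTensor M) := by
  simp only [conj_apply, LinearMap.rTensor_comp, coe_rTensor, symm_rTensor]

end CommSemiring

section CommRing

variable {R M N : Type*} [CommRing R] [AddCommGroup M] [Module R M] [AddCommGroup N] [Module R N]

theorem conj_sub_smul_id (e : M ≃ₗ[R] N) (f : Module.End R M) (q : R) :
    e.conj (f - q • LinearMap.id) = e.conj f - q • LinearMap.id := by
  rw [map_sub, map_smul, conj_id]

theorem conj_sub_smul_id_comp_conj_add_id (e : M ≃ₗ[R] N) (f : Module.End R M) (q : R) :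
    (e.conj f - q • LinearMap.id) ∘ₗ (e.conj f + LinearMap.id) =
      e.conj ((f - q • LinearMap.id) ∘ₗ (f + LinearMap.id)) := by
  rw [conj_comp, conj_sub_smul_id, map_add, conj_id]

end CommRing

end LinearEquiv

section Twist

variable {k V}

theorem twist_eq_conj (ζ : V ≃ₗ[k] V) (R : V ⊗[k] V →ₗ[k] V ⊗[k] V) :
    twist k V ζ R = (LinearEquiv.rTensor V ζ).conj R :=
  rfl

theorem op12_eq_conj (R : V ⊗[k] V →ₗ[k] V ⊗[k] V) :
    op12 k V R = (TensorProduct.assoc k V V V).conj (R.rTensor V) :=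
  rfl

theorem twist_eq_lTensor_symm_conj {ζ : V ≃ₗ[k] V} {R : V ⊗[k] V →ₗ[k] V ⊗[k] V}
    (hcomm : map ζ.toLinearMap ζ.toLinearMap ∘ₗ R = R ∘ₗ map ζ.toLinearMap ζ.toLinearMap) :
    twist k V ζ R = (LinearEquiv.lTensor V ζ).symm.conj R := by
  have hfix : (LinearEquiv.lTensor V ζ).conj ((LinearEquiv.rTensor V ζ).conj R) = R := by
    rw [← LinearEquiv.trans_apply, LinearEquiv.conj_trans, LinearEquiv.rTensor_trans_lTensor]
    exact LinearEquiv.conj_eq_self_iff.mpr hcomm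
  rw [twist_eq_conj, ← LinearEquiv.conj_symm_conj (LinearEquiv.lTensor V ζ)
    ((LinearEquiv.rTensor V ζ).conj R), hfix]

theorem op12_twist (ζ : V ≃ₗ[k] V) (R : V ⊗[k] V →ₗ[k] V ⊗[k] V) :
    op12 k V (twist k V ζ R) = (LinearEquiv.rTensor (V ⊗[k] V) ζ).conj (op12 k V R) := by
  have hassoc : (LinearEquiv.rTensor V (LinearEquiv.rTensor V ζ)).trans
      (TensorProduct.assoc k V V V) =
      (TensorProduct.assoc k V V V).trans (LinearEquiv.rTensor (V ⊗[k] V) ζ) :=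
    LinearEquiv.toLinearMap_injective <| TensorProduct.ext_threefold fun _ _ _ ↦ rfl
  rw [op12_eq_conj, op12_eq_conj, twist_eq_conj, LinearEquiv.rTensor_conj,
    ← LinearEquiv.trans_apply, LinearEquiv.conj_trans, hassoc, ← LinearEquiv.conj_trans,
    LinearEquiv.trans_apply]

theorem lTensor_lTensor_comp_op12 (g : V →ₗ[k] V) (R : V ⊗[k] V →ₗ[k] V ⊗[k] V) :
    (g.lTensor V).lTensor V ∘ₗ op12 k V R = op12 k V R ∘ₗ (g.lTensor V).lTensor V := by
  have hg : (g.lTensor V).lTensor V =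
      (TensorProduct.assoc k V V V).conj (g.lTensor (V ⊗[k] V)) := by
    ext x y z
    rfl
  rw [hg, op12_eq_conj, ← LinearEquiv.conj_comp, ← LinearEquiv.conj_comp,
    lTensor_comp_rTensor, rTensor_comp_lTensor]

theorem map_comp_twist {ζ : V ≃ₗ[k] V} {R : V ⊗[k] V →ₗ[k] V ⊗[k] V}
    (hcomm : map ζ.toLinearMap ζ.toLinearMap ∘ₗ R = R ∘ₗ map ζ.toLinearMap ζ.toLinearMap) :
    map ζ.toLinearMap ζ.toLinearMap ∘ₗ twist k V ζ R =
      twist k V ζ R ∘ₗ map ζ.toLinearMap ζ.toLinearMap := by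
  have hζζ : (TensorProduct.congr ζ ζ).toLinearMap ∘ₗ (LinearEquiv.rTensor V ζ).toLinearMap =
      (LinearEquiv.rTensor V ζ).toLinearMap ∘ₗ (TensorProduct.congr ζ ζ).toLinearMap :=
    TensorProduct.ext' fun _ _ ↦ rfl
  refine LinearEquiv.conj_eq_self_iff (e := TensorProduct.congr ζ ζ).mp ?_
  rw [twist_eq_conj, LinearEquiv.conj_conj_comm hζζ,
    LinearEquiv.conj_eq_self_iff (e := TensorProduct.congr ζ ζ) |>.mpr hcomm]

theorem twist_braid {ζ : V ≃ₗ[k] V} {R : V ⊗[k] V →ₗ[k] V ⊗[k] V}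
    (hcomm : map ζ.toLinearMap ζ.toLinearMap ∘ₗ R = R ∘ₗ map ζ.toLinearMap ζ.toLinearMap)
    (hbraid : op12 k V R ∘ₗ op23 k V R ∘ₗ op12 k V R = op23 k V R ∘ₗ op12 k V R ∘ₗ op23 k V R) :
    op12 k V (twist k V ζ R) ∘ₗ op23 k V (twist k V ζ R) ∘ₗ op12 k V (twist k V ζ R) =
      op23 k V (twist k V ζ R) ∘ₗ op12 k V (twist k V ζ R) ∘ₗ op23 k V (twist k V ζ R) := by
  set P₁ := LinearEquiv.rTensor (V ⊗[k] V) ζ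
  set P₃ := LinearEquiv.lTensor V (LinearEquiv.lTensor V ζ)
  have h12 : op12 k V (twist k V ζ R) = P₁.conj (P₃.symm.conj (op12 k V R)) := by
    rw [op12_twist,
      LinearEquiv.conj_eq_self_iff (e := P₃.symm) |>.mpr (lTensor_lTensor_comp_op12 _ R)]
  have h23 : op23 k V (twist k V ζ R) = P₁.conj (P₃.symm.conj (op23 k V R)) := by
    have hP₁ : P₁.conj (op23 k V R) = op23 k V R :=
      LinearEquiv.conj_eq_self_iff.mpr (by simp [P₁, op23])
    rw [LinearEquiv.conj_conj_comm (by simp [P₁, P₃]), hP₁, twist_eq_lTensor_symm_conj hcomm]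
    exact LinearEquiv.lTensor_conj _ R
  rw [h12, h23, ← LinearEquiv.conj_comp, ← LinearEquiv.conj_comp, ← LinearEquiv.conj_comp,
    ← LinearEquiv.conj_comp, hbraid]
  simp only [LinearEquiv.conj_comp]

theorem IsHeckeSymmetry.twist {q : k} {ζ : V ≃ₗ[k] V} {R : V ⊗[k] V →ₗ[k] V ⊗[k] V}
    (hR : IsHeckeSymmetry k V q R)
    (hcomm : map ζ.toLinearMap ζ.toLinearMap ∘ₗ R = R ∘ₗ map ζ.toLinearMap ζ.toLinearMap) :
    IsHeckeSymmetry k V q (twist k V ζ R) := by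
  obtain ⟨hq, hbraid, hhecke⟩ := hR
  refine ⟨hq, twist_braid hcomm hbraid, ?_⟩
  rw [twist_eq_conj, LinearEquiv.conj_sub_smul_id_comp_conj_add_id, hhecke, map_zero]

end Twist

theorem stmt0 (q : k) (R : V ⊗[k] V →ₗ[k] V ⊗[k] V)
    (hR : IsHeckeSymmetry k V q R) (ζ : V ≃ₗ[k] V)
    (hcomm : TensorProduct.map ζ.toLinearMap ζ.toLinearMap ∘ₗ R =
      R ∘ₗ TensorProduct.map ζ.toLinearMap ζ.toLinearMap) :
    -- (a)
    (twist k V ζ R =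
      LinearMap.lTensor V ζ.symm.toLinearMap ∘ₗ R ∘ₗ LinearMap.lTensor V ζ.toLinearMap) ∧
    -- (b)
    IsHeckeSymmetry k V q (twist k V ζ R) ∧
    -- (c)
    (LinearMap.range (twist k V ζ R - q • LinearMap.id) =
      Submodule.map (LinearMap.rTensor V ζ.toLinearMap)
        (LinearMap.range (R - q • LinearMap.id))) ∧
    -- (d)
    (TensorProduct.map ζ.toLinearMap ζ.toLinearMap ∘ₗ twist k V ζ R =
      twist k V ζ R ∘ₗ TensorProduct.map ζ.toLinearMap ζ.toLinearMap) ∧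
    LinearMap.rTensor V ζ.symm.toLinearMap ∘ₗ twist k V ζ R ∘ₗ
      LinearMap.rTensor V ζ.toLinearMap = R := by
  refine ⟨twist_eq_lTensor_symm_conj hcomm, hR.twist hcomm, ?_, map_comp_twist hcomm,
    LinearEquiv.conj_symm_conj (LinearEquiv.rTensor V ζ) R⟩
  rw [twist_eq_conj, ← LinearEquiv.conj_sub_smul_id, LinearEquiv.range_conj]
  rfl
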